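/- The matching complex of the 5-cycle C₅ is again a 5-cycle; moreover, if M(G) is isomorphic to the cycle C₅ then G is isomorphic to C₅. -/

import Mathlib

open SimpleGraph Finset

/-- Two edges (elements of `Sym2 V`) are incident if they share a vertex. -/
def Incid {V : Type} (e f : Sym2 V) : Prop := ∃ v, v ∈ e ∧ v ∈ f

/-- A face of the matching complex `M(G)`: a finite set of edges of `G`
that are pairwise non-incident (a matching of `G`). -/
def IsMatchingSet {V : Type} (G : SimpleGraph V) (s : Finset (Sym2 V)) : Prop :=
  (∀ e ∈ s, e ∈ G.edgeSet) ∧ ∀ e ∈ s, ∀ f ∈ s, e ≠ f → ¬ Incid e f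

/-- The 1-skeleton of the matching complex of `G`: the graph whose vertices are
the edges of `G`, two being adjacent iff they are distinct and non-incident. -/
def mcSkeleton {V : Type} (G : SimpleGraph V) : SimpleGraph G.edgeSet where
  Adj e f := e ≠ f ∧ ¬ Incid (e : Sym2 V) (f : Sym2 V)
  symm := ⟨fun e f h =>
    ⟨h.1.symm, fun hi => h.2 (Exists.elim hi fun v hv => ⟨v, hv.2, hv.1⟩)⟩⟩
  loopless := ⟨fun e h => h.1 rfl⟩

/-- The cycle on `ZMod n`. -/
def cycZ (n : ℕ) : SimpleGraph (ZMod n) :=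
  SimpleGraph.fromRel (fun i j => j = i + 1)


instance {V : Type} [DecidableEq V] [Fintype V] (e f : Sym2 V) : Decidable (Incid e f) :=
  inferInstanceAs (Decidable (∃ v, v ∈ e ∧ v ∈ f))

instance : DecidableRel (cycZ 5).Adj := fun a b =>
  inferInstanceAs (Decidable (a ≠ b ∧ (b = a + 1 ∨ a = b + 1)))

instance {V : Type} [DecidableEq V] [Fintype V] (G : SimpleGraph V) :
    DecidableRel (mcSkeleton G).Adj := fun e f =>
  inferInstanceAs (Decidable (e ≠ f ∧ ¬ Incid (e : Sym2 V) (f : Sym2 V)))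

lemma hmem5 : ∀ i : ZMod 5, s(2*i, 2*i+1) ∈ (cycZ 5).edgeSet := by decide

def f5 : ZMod 5 → (cycZ 5).edgeSet := fun i => ⟨s(2*i, 2*i+1), hmem5 i⟩

theorem mc_part1 : Nonempty (mcSkeleton (cycZ 5) ≃g cycZ 5) := by
  set f := f5 with hf
  have hinj : Function.Injective f := by
    intro i j h
    have h2 : s(2*i, 2*i+1) = s(2*j, 2*j+1) := congrArg Subtype.val h
    exact (by decide : ∀ i j : ZMod 5, s(2*i, 2*i+1) = s(2*j, 2*j+1) → i = j) i j h2
  have hsurj : Function.Surjective f := by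
    rintro ⟨e, he⟩
    obtain ⟨i, hi⟩ := (by decide :
      ∀ e : Sym2 (ZMod 5), e ∈ (cycZ 5).edgeSet → ∃ i : ZMod 5, s(2*i, 2*i+1) = e) e he
    exact ⟨i, Subtype.ext hi⟩
  have hrel : ∀ i j : ZMod 5, (mcSkeleton (cycZ 5)).Adj (f i) (f j) ↔ (cycZ 5).Adj i j := by
    rw [hf]; decide
  exact ⟨(⟨Equiv.ofBijective f ⟨hinj, hsurj⟩,
    fun {i j} => hrel i j⟩ : cycZ 5 ≃g mcSkeleton (cycZ 5)).symm⟩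

theorem mc_part2 {V : Type} [Fintype V] [DecidableEq V] (G : SimpleGraph V)
    (hdeg : ∀ v : V, ∃ w, G.Adj v w)
    (h : Nonempty (mcSkeleton G ≃g cycZ 5)) : Nonempty (G ≃g cycZ 5) := by
  obtain ⟨iso⟩ := h
  set F : ZMod 5 → Sym2 V := fun i => (iso.symm (2*i) : Sym2 V) with hFdef
  have hFadj : ∀ i j : ZMod 5,
      ((F i ≠ F j) ∧ ¬ Incid (F i) (F j)) ↔ (cycZ 5).Adj (2*i) (2*j) := by
    intro i j
    have h1 : (mcSkeleton G).Adj (iso.symm (2*i)) (iso.symm (2*j)) ↔ (cycZ 5).Adj (2*i) (2*j) :=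
      iso.symm.map_rel_iff
    rw [← h1]
    constructor
    · rintro ⟨hne, hni⟩
      exact ⟨fun hh => hne (congrArg Subtype.val hh), hni⟩
    · rintro ⟨hne, hni⟩
      exact ⟨fun hh => hne (Subtype.ext hh), hni⟩
  have hFmem : ∀ i, F i ∈ G.edgeSet := fun i => (iso.symm (2*i)).2
  have hFinj : Function.Injective F := by
    intro i j hij
    have h2 : (2 : ZMod 5)*i = 2*j := by
      have := iso.symm.injective (Subtype.ext hij)
      exact this
    exact (by decide : ∀ i j : ZMod 5, 2*i = 2*j → i = j) i j h2
  have hInc : ∀ i : ZMod 5, Incid (F i) (F (i+1)) := by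
    intro i
    by_contra hni
    have hne : F i ≠ F (i+1) := fun hh =>
      (by decide : ∀ i : ZMod 5, i ≠ i + 1) i (hFinj hh)
    exact (by decide : ∀ i : ZMod 5, ¬ (cycZ 5).Adj (2*i) (2*(i+1))) i
      ((hFadj i (i+1)).1 ⟨hne, hni⟩)
  have hnInc : ∀ i j : ZMod 5, (j = i + 2 ∨ j = i + 3) → ¬ Incid (F i) (F j) := by
    intro i j hij hinc
    have hadj : (cycZ 5).Adj (2*i) (2*j) :=
      (by decide : ∀ i j : ZMod 5, (j = i+2 ∨ j = i+3) → (cycZ 5).Adj (2*i) (2*j)) i j hij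
    exact ((hFadj i j).2 hadj).2 hinc
  choose v hv1 hv2 using hInc
  have hvinj : Function.Injective v := by
    intro i j hvij
    by_contra hne
    rcases (by decide : ∀ i j : ZMod 5, i ≠ j → j = i+1 ∨ j = i+2 ∨ j = i+3 ∨ j = i+4) i j hne
      with h1 | h2 | h3 | h4
    · exact hnInc i (i+1+1) (Or.inl (by ring)) ⟨v i, hv1 i, by rw [hvij, h1]; exact hv2 (i+1)⟩
    · exact hnInc i j (Or.inl h2) ⟨v i, hv1 i, hvij ▸ hv1 j⟩
    · exact hnInc i j (Or.inr h3) ⟨v i, hv1 i, hvij ▸ hv1 j⟩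
    · exact hnInc (i+1) j (Or.inr (by rw [h4]; ring)) ⟨v i, hv2 i, hvij ▸ hv1 j⟩
  have h41 : ∀ i : ZMod 5, i + 4 + 1 = i := by
    intro i
    have : (4 + 1 : ZMod 5) = 0 := by decide
    rw [add_assoc, this, add_zero]
  have h14 : ∀ i : ZMod 5, i + 1 + 4 = i := by
    intro i
    have : (1 + 4 : ZMod 5) = 0 := by decide
    rw [add_assoc, this, add_zero]
  have hFeq : ∀ i : ZMod 5, F i = s(v (i+4), v i) := by
    intro i
    have hm1 : v (i+4) ∈ F i := by
      have := hv2 (i+4); rwa [h41 i] at this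
    have hne : v (i+4) ≠ v i := fun hh =>
      (by decide : ∀ i : ZMod 5, i + 4 ≠ i) i (hvinj hh)
    exact (Sym2.mem_and_mem_iff hne).1 ⟨hm1, hv1 i⟩
  have hE : ∀ e ∈ G.edgeSet, ∃ i, F i = e := by
    intro e he
    refine ⟨3 * iso ⟨e, he⟩, ?_⟩
    show ((iso.symm (2*(3 * iso ⟨e, he⟩)) : G.edgeSet) : Sym2 V) = e
    rw [(by decide : ∀ a : ZMod 5, 2*(3*a) = a) (iso ⟨e, he⟩), iso.symm_apply_apply]
  have hvsurj : Function.Surjective v := by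
    intro x
    obtain ⟨w, hw⟩ := hdeg x
    obtain ⟨i, hi⟩ := hE s(x, w) (G.mem_edgeSet.2 hw)
    rw [hFeq] at hi
    have hx : x ∈ s(v (i+4), v i) := hi ▸ Sym2.mem_mk_left x w
    rcases Sym2.mem_iff.1 hx with hh | hh
    exacts [⟨i+4, hh.symm⟩, ⟨i, hh.symm⟩]
  have key : ∀ i j : ZMod 5, G.Adj (v i) (v j) ↔ (cycZ 5).Adj i j := by
    have hc : ∀ i j : ZMod 5, (cycZ 5).Adj i j ↔ (j = i+1 ∨ i = j+1) := by decide
    intro i j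
    rw [hc]
    constructor
    · intro hadj
      obtain ⟨k, hk⟩ := hE s(v i, v j) (G.mem_edgeSet.2 hadj)
      rw [hFeq] at hk
      rcases Sym2.eq_iff.1 hk with ⟨ha, hb⟩ | ⟨ha, hb⟩
      · left
        have hik : i = k + 4 := (hvinj ha).symm
        have hjk : j = k := (hvinj hb).symm
        subst hjk
        exact (by decide : ∀ i j : ZMod 5, i = j + 4 → j = i + 1) i j hik
      · right
        have hik : i = k := (hvinj hb).symm
        have hjk : j = k + 4 := (hvinj ha).symm
        subst hik
        exact (by decide : ∀ i j : ZMod 5, j = i + 4 → i = j + 1) i j hjk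
    · rintro (hh | hh)
      · subst hh
        have hm := hFmem (i+1)
        rw [hFeq, h14 i] at hm
        exact G.mem_edgeSet.1 hm
      · subst hh
        have hm := hFmem (j+1)
        rw [hFeq, h14 j] at hm
        exact (G.mem_edgeSet.1 hm).symm
  exact ⟨(⟨Equiv.ofBijective v ⟨hvinj, hvsurj⟩, fun {i j} => key i j⟩ : cycZ 5 ≃g G).symm⟩


/-- `M(C₅) ≅ C₅`; moreover, if `M(G) ≅ C₅` then `G ≅ C₅`. -/
theorem matchingComplex_C5 :
    Nonempty (mcSkeleton (cycZ 5) ≃g cycZ 5) ∧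
    (∀ {V : Type} [Fintype V] [DecidableEq V] (G : SimpleGraph V),
      (∀ v : V, ∃ w, G.Adj v w) →
      Nonempty (mcSkeleton G ≃g cycZ 5) → Nonempty (G ≃g cycZ 5)) := by
  exact ⟨mc_part1, fun G hdeg h => mc_part2 G hdeg h⟩
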